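/- arXiv:1605.05819 — 3 statements merged into one kernel-verified Lean document; each statement's English description precedes it below -/
import Mathlib

section
/- Let φ : Δₙ → ℝ be differentiable and exponentially concave, and define π_i(p) = p_i (1 + ∇φ(p)·(e⁽ⁱ⁾ − p)) for i = 1,…,n, where e⁽ⁱ⁾ is the i-th standard basis vector. Then π(p) lies in the closed unit simplex: π_i(p) ≥ 0 for all i and Σᵢ π_i(p) = 1. -/
open Real Finset

/-!
Concavity of `exp ∘ φ` on the segment from `p` to `q` gives the tangent-line bound
`exp (φ q - φ p) ≤ 1 + ∇φ(p)·(q - p)`, so `1 + ∇φ(p)·(q - p) > 0` for every `q` in the open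
simplex. Letting `q` run along the segment from `p` to the vertex `e⁽ⁱ⁾` (which is not in the
open simplex) gives `1 + ∇φ(p)·(e⁽ⁱ⁾ - p) ≥ 0`, i.e. `πᵢ(p) ≥ 0`. That the weights sum to `1`
is an algebraic identity, using only `∑ pᵢ = 1`.
-/

def openSimplex (n : ℕ) : Set (Fin n → ℝ) :=
  {p | (∀ i, 0 < p i) ∧ ∑ i, p i = 1}

section Concave

variable {E : Type*} [AddCommGroup E] [Module ℝ E] {s : Set E} {f : E → ℝ} {p q : E} {f' : ℝ}

theorem ConcaveOn.sub_le_of_hasDerivAt_segment (hf : ConcaveOn ℝ s f) (hp : p ∈ s) (hq : q ∈ s)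
    (hf' : HasDerivAt (fun t : ℝ => f (p + t • (q - p))) f' 0) :
    f q - f p ≤ f' := by
  have hline : (fun t : ℝ => f (p + t • (q - p))) = f ∘ AffineMap.lineMap p q := by
    ext t
    simp [AffineMap.lineMap_apply_module', add_comm]
  have hconc : ConcaveOn ℝ (AffineMap.lineMap p q ⁻¹' s) (f ∘ AffineMap.lineMap p q) :=
    hf.comp_affineMap _
  rw [hline] at hf'
  simpa [slope_def_field] using
    hconc.slope_le_of_hasDerivAt (by simpa using hp) (by simpa using hq) zero_lt_one hf'

theorem exp_sub_le_one_add_of_concaveOn_exp {φ : E → ℝ} (hφ : ConcaveOn ℝ s (fun x => exp (φ x)))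
    (hp : p ∈ s) (hq : q ∈ s) (hφ' : HasDerivAt (fun t : ℝ => φ (p + t • (q - p))) f' 0) :
    exp (φ q - φ p) ≤ 1 + f' := by
  have hexp : HasDerivAt (fun t : ℝ => exp (φ (p + t • (q - p)))) (exp (φ p) * f') 0 := by
    simpa using hφ'.exp
  have key := hφ.sub_le_of_hasDerivAt_segment hp hq hexp
  rw [exp_sub, div_le_iff₀ (exp_pos _)]
  linarith

end Concave

theorem add_smul_sub_mem_openSimplex {n : ℕ} {p q : Fin n → ℝ} {ε : ℝ} (hp : p ∈ openSimplex n)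
    (hq₀ : ∀ i, 0 ≤ q i) (hq₁ : ∑ i, q i = 1) (hε : ε ∈ Set.Ico (0 : ℝ) 1) :
    p + ε • (q - p) ∈ openSimplex n := by
  obtain ⟨hp₀, hp₁⟩ := hp
  obtain ⟨hε₀, hε₁⟩ := hε
  refine ⟨fun i => ?_, ?_⟩
  · have := hp₀ i
    have := hq₀ i
    simp only [Pi.add_apply, Pi.smul_apply, Pi.sub_apply, smul_eq_mul]
    nlinarith
  · simp only [Pi.add_apply, Pi.smul_apply, Pi.sub_apply, smul_eq_mul, sum_add_distrib,
      ← mul_sum, sum_sub_distrib, hp₁, hq₁]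
    ring

theorem one_add_nonneg_of_forall_one_add_mul_pos {S : ℝ}
    (h : ∀ ε ∈ Set.Ioo (0 : ℝ) 1, 0 < 1 + ε * S) : 0 ≤ 1 + S := by
  by_contra! hS
  have hS' : S < 0 := by linarith
  have := h (-1 / S) ⟨div_pos_of_neg_of_neg (by norm_num) hS', by
    rw [div_lt_one_of_neg hS']; linarith⟩
  rw [div_mul_cancel₀ _ hS'.ne] at this
  norm_num at this

theorem sum_mul_one_add_sum_mul_single_sub {R ι : Type*} [CommRing R] [Fintype ι] [DecidableEq ι]
    (p g : ι → R) (hp : ∑ i, p i = 1) :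
    ∑ i, p i * (1 + ∑ j, g j * ((if j = i then (1 : R) else 0) - p j)) = 1 := by
  have hinner : ∀ i, ∑ j, g j * ((if j = i then (1 : R) else 0) - p j) = g i - ∑ j, g j * p j := by
    intro i
    simp [mul_sub, sum_sub_distrib]
  simp_rw [hinner, mul_add, mul_one, mul_sub, sum_add_distrib, sum_sub_distrib, ← sum_mul, hp,
    one_mul]
  simp only [mul_comm (p _), sub_self, add_zero]

/-- The portfolio map `πᵢ(p) = pᵢ(1 + ∇φ(p)·(e⁽ⁱ⁾ − p))` generated by a differentiable
exponentially concave function `φ` (with gradient `g`) takes values in the closed unit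
simplex: all weights are nonnegative and they sum to 1. -/
theorem portfolio_map_mem_closed_simplex (n : ℕ) (φf : (Fin n → ℝ) → ℝ)
    (g : (Fin n → ℝ) → (Fin n → ℝ))
    (hconc : ConcaveOn ℝ (openSimplex n) (fun p => Real.exp (φf p)))
    (hgrad : ∀ p ∈ openSimplex n, ∀ q ∈ openSimplex n,
      HasDerivAt (fun t : ℝ => φf (p + t • (q - p))) (∑ i, g p i * (q i - p i)) 0) :
    ∀ p ∈ openSimplex n,
      (∀ i, 0 ≤ p i * (1 + ∑ j, g p j * ((if j = i then (1:ℝ) else 0) - p j))) ∧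
      ∑ i, p i * (1 + ∑ j, g p j * ((if j = i then (1:ℝ) else 0) - p j)) = 1 := by
  intro p hp
  have tangent_pos : ∀ q ∈ openSimplex n, 0 < 1 + ∑ j, g p j * (q j - p j) := fun q hq =>
    (exp_pos _).trans_le (exp_sub_le_one_add_of_concaveOn_exp hconc hp hq (hgrad p hp q hq))
  refine ⟨fun i => mul_nonneg (hp.1 i).le ?_, sum_mul_one_add_sum_mul_single_sub p (g p) hp.2⟩
  set e : Fin n → ℝ := fun j => if j = i then 1 else 0
  refine one_add_nonneg_of_forall_one_add_mul_pos fun ε hε => ?_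
  have hq : p + ε • (e - p) ∈ openSimplex n :=
    add_smul_sub_mem_openSimplex hp (fun j => by positivity) (by simp [e]) ⟨hε.1.le, hε.2⟩
  simpa [mul_sum, mul_left_comm ε] using tangent_pos _ hq
end

section
/- Let c(θ, φ) = ψ(θ − φ) with ψ(x) = log(1 + Σᵢ e^{xᵢ}) on ℝ^{n−1}. If φ : Δₙ → ℝ ∪ {−∞} is exponentially concave, then the function f(θ) = φ(p(θ)) + ψ(θ) (where p(θ) is the inverse exponential coordinate map) is c-concave on ℝ^{n−1}, i.e., f = g* for some g : ℝ^{n−1} → ℝ ∪ {−∞}, where g*(θ) = inf_φ (c(θ,φ) − g(φ)). -/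
open Real Finset

/-- `ψ(x) = log(1 + Σ e^{xᵢ})`. -/
noncomputable def psiFun {n : ℕ} (x : Fin n → ℝ) : ℝ :=
  Real.log (1 + ∑ i, Real.exp (x i))

/-- Inverse of the exponential coordinate map: `pᵢ = e^{θᵢ − ψ(θ)}` (with `θₙ = 0`). -/
noncomputable def pMap {n : ℕ} (θ : Fin n → ℝ) : Fin (n + 1) → ℝ :=
  fun i => Real.exp ((Fin.snoc θ (0 : ℝ) : Fin (n + 1) → ℝ) i - psiFun θ)

/-!
Put `x = e^θ ∈ (0, ∞)ⁿ`. Then `e^{f(θ)} = H(x) := (1 + Σ xᵢ) Φ(p(θ))`, and `p(θ)` is the point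
`(x, 1) / (1 + Σ xᵢ)` of the simplex, so `H` is the perspective of `Φ` along the slice of the
positive cone with last coordinate `1`; in particular `H` is concave and nonnegative on the
orthant. On the other side `e^{c(θ, φ) + log β} = β + Σ β e^{−φᵢ} xᵢ` ranges over all affine
functions of `x` with positive coefficients. A supergradient of `H` at `e^θ` is an affine
majorant touching `H` there; its coefficients are nonnegative because `H ≥ 0`, and raising them
by a small `δ` makes them positive at a cost that tends to `0`. Hence `f` is the pointwise
infimum of the functions `c(·, φ) + a` above it, i.e. `f = (f^c)^c`. If `Φ` vanishes somewhere,
the touching majorant is `0`, so `Φ ∘ p ≡ 0`, `f ≡ −∞` and `g ≡ +∞` works.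
-/

def posOrthant (ι : Type*) : Set (ι → ℝ) := Set.univ.pi fun _ => Set.Ioi 0

theorem isOpen_posOrthant (ι : Type*) [Finite ι] : IsOpen (posOrthant ι) :=
  isOpen_set_pi Set.finite_univ fun _ _ => isOpen_Ioi

theorem convex_posOrthant (ι : Type*) : Convex ℝ (posOrthant ι) :=
  convex_pi fun _ _ => convex_Ioi 0

theorem one_add_sum_pos {ι : Type*} [Fintype ι] {x : ι → ℝ} (hx : x ∈ posOrthant ι) :
    0 < 1 + ∑ j, x j := by
  have : 0 ≤ ∑ j, x j := Finset.sum_nonneg fun j _ => (hx j (Set.mem_univ j)).le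
  linarith

theorem nonneg_of_forall_pos_add_mul {a b : ℝ} (h : ∀ t > 0, 0 ≤ a + t * b) : 0 ≤ a ∧ 0 ≤ b := by
  constructor
  · have hlim : Filter.Tendsto (fun t => a + t * b) (nhdsWithin 0 (Set.Ioi 0)) (nhds a) := by
      apply tendsto_nhdsWithin_of_tendsto_nhds
      exact (show Continuous fun t : ℝ => a + t * b by fun_prop).tendsto' 0 a (by simp)
    exact ge_of_tendsto hlim (eventually_nhdsWithin_of_forall h)
  · by_contra! hb
    have := h ((|a| + 1) / -b) (div_pos (by positivity) (neg_pos.2 hb))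
    rw [div_mul_eq_mul_div, div_neg, mul_div_cancel_right₀ _ hb.ne] at this
    linarith [le_abs_self a]

theorem nonneg_coeffs_of_forall_posOrthant {ι : Type*} [Fintype ι] {b : ℝ} {g : ι → ℝ}
    (h : ∀ x ∈ posOrthant ι, 0 ≤ b + ∑ i, g i * x i) : 0 ≤ b ∧ ∀ i, 0 ≤ g i := by
  classical
  refine ⟨(nonneg_of_forall_pos_add_mul (b := ∑ i, g i) fun t ht => ?_).1, fun i =>
    (nonneg_of_forall_pos_add_mul (a := b + ∑ j, g j) fun t ht => ?_).2⟩
  · simpa [Finset.mul_sum, mul_comm] using h (fun _ => t) fun _ _ => ht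
  · have := h (fun j => 1 + Pi.single (M := fun _ => ℝ) i t j) fun j _ => by
      rcases eq_or_ne j i with rfl | hj
      · simp only [Pi.single_eq_same, Set.mem_Ioi]; positivity
      · simp [hj]
    simpa [mul_add, Finset.sum_add_distrib, Pi.single_apply, add_assoc, mul_comm] using this

theorem ConcaveOn.exists_le_add_of_isOpen {E : Type*} [AddCommGroup E] [Module ℝ E]
    [TopologicalSpace E] [IsTopologicalAddGroup E] [ContinuousSMul ℝ E]
    {U : Set E} {Ψ : E → ℝ} (hΨ : ConcaveOn ℝ U Ψ) (hU : IsOpen U) (hcont : ContinuousOn Ψ U)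
    {x₀ : E} (hx₀ : x₀ ∈ U) :
    ∃ L : StrongDual ℝ E, ∀ x ∈ U, Ψ x ≤ Ψ x₀ + L (x - x₀) := by
  set O := {p : E × ℝ | p.1 ∈ U ∧ p.2 < Ψ p.1}
  have hO : IsOpen O := by
    have hcont' : ContinuousOn (fun p : E × ℝ => Ψ p.1 - p.2) (Prod.fst ⁻¹' U) :=
      (hcont.comp continuousOn_fst (Set.mapsTo_preimage _ _)).sub continuousOn_snd
    convert hcont'.isOpen_inter_preimage (hU.preimage continuous_fst) (isOpen_Ioi (a := 0))
    ext p
    simp [O, sub_pos]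
  obtain ⟨f, hf⟩ := geometric_hahn_banach_open_point hΨ.convex_strict_hypograph hO
    (fun h => lt_irrefl _ h.2 : (x₀, Ψ x₀) ∉ O)
  set u := f.comp (ContinuousLinearMap.inl ℝ E ℝ)
  set c := f (0, 1)
  have hf_apply (x : E) (t : ℝ) : f (x, t) = u x + t * c := by
    rw [show (x, t) = (x, 0) + t • ((0 : E), (1 : ℝ)) by simp, map_add, map_smul, smul_eq_mul]
    rfl
  have hsep : ∀ x ∈ U, ∀ t < Ψ x, u x + t * c < u x₀ + Ψ x₀ * c := fun x hx t ht => by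
    simpa only [hf_apply] using hf (x, t) ⟨hx, ht⟩
  have hc : 0 < c := by linarith [hsep x₀ hx₀ (Ψ x₀ - 1) (by linarith)]
  refine ⟨-c⁻¹ • u, fun x hx => ?_⟩
  have : Ψ x ≤ (u x₀ + Ψ x₀ * c - u x) / c := le_of_forall_lt fun t ht => by
    rw [lt_div_iff₀ hc]; linarith [hsep x hx t ht]
  rw [le_div_iff₀ hc] at this
  simp only [smul_apply, map_sub, smul_eq_mul]
  field_simp
  linarith

theorem ConcaveOn.exists_nonneg_affine_support {ι : Type*} [Fintype ι]
    {Ψ : (ι → ℝ) → ℝ} (hΨ : ConcaveOn ℝ (posOrthant ι) Ψ) (hΨ0 : ∀ x ∈ posOrthant ι, 0 ≤ Ψ x)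
    {x₀ : ι → ℝ} (hx₀ : x₀ ∈ posOrthant ι) :
    ∃ (b : ℝ) (g : ι → ℝ), 0 ≤ b ∧ (∀ i, 0 ≤ g i) ∧
      (∀ x ∈ posOrthant ι, Ψ x ≤ b + ∑ i, g i * x i) ∧ Ψ x₀ = b + ∑ i, g i * x₀ i := by
  obtain ⟨L, hL⟩ := hΨ.exists_le_add_of_isOpen (isOpen_posOrthant ι)
    (hΨ.continuousOn (isOpen_posOrthant ι)) hx₀
  classical
  set g : ι → ℝ := fun i => L fun j => if i = j then 1 else 0
  have hLg (x : ι → ℝ) : L x = ∑ i, g i * x i := by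
    rw [← L.coe_coe, LinearMap.pi_apply_eq_sum_univ]
    simp [g, mul_comm]
  have hsupp : ∀ x ∈ posOrthant ι, Ψ x ≤ (Ψ x₀ - L x₀) + ∑ i, g i * x i := fun x hx => by
    linarith [hL x hx, map_sub L x x₀, hLg x]
  obtain ⟨hb, hg⟩ := nonneg_coeffs_of_forall_posOrthant fun x hx => (hΨ0 x hx).trans (hsupp x hx)
  exact ⟨_, g, hb, hg, hsupp, by rw [hLg]; ring⟩

noncomputable def cTransform {X Y : Type*} (c : X → Y → ℝ) (g : Y → EReal) (x : X) : EReal :=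
  ⨅ y, (c x y : EReal) - g y

section CTransform

variable {X Y : Type*} (c : X → Y → ℝ) (f : X → ℝ)

theorem le_cTransform_cTransform_flip (x : X) :
    (f x : EReal) ≤ cTransform c (cTransform (flip c) (fun x => f x)) x := by
  refine le_iInf fun y => ?_
  have hg : cTransform (flip c) (fun x => f x) y ≤ ((c x y - f x : ℝ) : EReal) :=
    (iInf_le _ x).trans_eq (EReal.coe_sub _ _).symm
  calc (f x : EReal) = (c x y : EReal) - ((c x y - f x : ℝ) : EReal) := by
        rw [← EReal.coe_sub, sub_sub_cancel]
    _ ≤ (c x y : EReal) - cTransform (flip c) (fun x => f x) y := EReal.sub_le_sub le_rfl hg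

theorem cTransform_cTransform_flip_le {x : X}
    (h : ∀ r : ℝ, f x < r → ∃ y a, (∀ x', f x' ≤ c x' y + a) ∧ c x y + a ≤ r) :
    cTransform c (cTransform (flip c) (fun x => f x)) x ≤ f x := by
  refine EReal.le_of_forall_lt_iff_le.1 fun r hr => ?_
  obtain ⟨y, a, hsupp, hxy⟩ := h r (EReal.coe_lt_coe_iff.1 hr)
  have hg : ((-a : ℝ) : EReal) ≤ cTransform (flip c) (fun x => f x) y :=
    le_iInf fun x' => by
      rw [← EReal.coe_sub, EReal.coe_le_coe_iff]
      linarith [hsupp x', show flip c y x' = c x' y from rfl]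
  calc cTransform c (cTransform (flip c) (fun x => f x)) x
      ≤ (c x y : EReal) - cTransform (flip c) (fun x => f x) y := iInf_le _ y
    _ ≤ (c x y : EReal) - ((-a : ℝ) : EReal) := EReal.sub_le_sub le_rfl hg
    _ ≤ r := by rw [← EReal.coe_sub, EReal.coe_le_coe_iff]; linarith

end CTransform

noncomputable def toSimplex {n : ℕ} (x : Fin n → ℝ) : Fin (n + 1) → ℝ :=
  fun i => (Fin.snoc x 1 : Fin (n + 1) → ℝ) i / (1 + ∑ j, x j)

noncomputable def simplexPerspective {n : ℕ} (Φ : (Fin (n + 1) → ℝ) → ℝ) (x : Fin n → ℝ) : ℝ :=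
  (1 + ∑ j, x j) * Φ (toSimplex x)

section Simplex

variable {n : ℕ}

theorem exp_psiFun (θ : Fin n → ℝ) : exp (psiFun θ) = 1 + ∑ i, exp (θ i) :=
  exp_log (by positivity)

theorem toSimplex_mem {x : Fin n → ℝ} (hx : x ∈ posOrthant (Fin n)) :
    toSimplex x ∈ openSimplex (n + 1) := by
  have hs := one_add_sum_pos hx
  refine ⟨fun i => div_pos ?_ hs, ?_⟩
  · refine Fin.lastCases ?_ (fun j => ?_) i
    · simp
    · simpa using hx j (Set.mem_univ j)
  · simp only [toSimplex, ← Finset.sum_div, Fin.sum_univ_castSucc, Fin.snoc_castSucc,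
      Fin.snoc_last]
    rw [add_comm, div_self hs.ne']

theorem pMap_eq_toSimplex (θ : Fin n → ℝ) : pMap θ = toSimplex fun i => exp (θ i) := by
  funext i
  rw [pMap, toSimplex, exp_sub, exp_psiFun]
  congr 1
  refine Fin.lastCases ?_ (fun j => ?_) i <;> simp

theorem simplexPerspective_exp (Φ : (Fin (n + 1) → ℝ) → ℝ) (θ : Fin n → ℝ) :
    simplexPerspective Φ (fun i => exp (θ i)) = exp (psiFun θ) * Φ (pMap θ) := by
  rw [simplexPerspective, pMap_eq_toSimplex, exp_psiFun]

theorem toSimplex_add {x y : Fin n → ℝ} (hx : x ∈ posOrthant (Fin n))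
    (hy : y ∈ posOrthant (Fin n)) {a b : ℝ} (hab : a + b = 1) :
    toSimplex (a • x + b • y) =
      (a * (1 + ∑ j, x j) / (1 + ∑ j, (a • x + b • y) j)) • toSimplex x +
        (b * (1 + ∑ j, y j) / (1 + ∑ j, (a • x + b • y) j)) • toSimplex y := by
  have hs := one_add_sum_pos hx
  have ht := one_add_sum_pos hy
  funext i
  have hsnoc : (Fin.snoc (a • x + b • y) 1 : Fin (n + 1) → ℝ) i =
      a * (Fin.snoc x 1 : Fin (n + 1) → ℝ) i + b * (Fin.snoc y 1 : Fin (n + 1) → ℝ) i := by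
    refine Fin.lastCases ?_ (fun j => ?_) i
    · simp [hab]
    · simp
  simp only [toSimplex, Pi.add_apply, Pi.smul_apply, smul_eq_mul, hsnoc]
  field_simp

theorem concaveOn_simplexPerspective {Φ : (Fin (n + 1) → ℝ) → ℝ}
    (hΦ : ConcaveOn ℝ (openSimplex (n + 1)) Φ) :
    ConcaveOn ℝ (posOrthant (Fin n)) (simplexPerspective Φ) := by
  refine ⟨convex_posOrthant _, fun x hx y hy a b ha hb hab => ?_⟩
  set s := 1 + ∑ j, x j
  set t := 1 + ∑ j, y j
  have hr : 1 + ∑ j, (a • x + b • y) j = a * s + b * t := by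
    simp only [s, t, Pi.add_apply, Pi.smul_apply, smul_eq_mul, Finset.sum_add_distrib,
      ← Finset.mul_sum]
    linear_combination -hab
  have hpos : 0 < a * s + b * t := hr ▸ one_add_sum_pos (convex_posOrthant _ hx hy ha hb hab)
  have hconc := hΦ.2 (toSimplex_mem hx) (toSimplex_mem hy)
    (div_nonneg (mul_nonneg ha (one_add_sum_pos hx).le) hpos.le)
    (div_nonneg (mul_nonneg hb (one_add_sum_pos hy).le) hpos.le)
    (by rw [← add_div, div_self hpos.ne'])
  rw [← hr, ← toSimplex_add hx hy hab, hr] at hconc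
  simp only [simplexPerspective, smul_eq_mul, hr]
  calc a * (s * Φ (toSimplex x)) + b * (t * Φ (toSimplex y))
      = (a * s + b * t) * (a * s / (a * s + b * t) * Φ (toSimplex x) +
          b * t / (a * s + b * t) * Φ (toSimplex y)) := by field_simp
    _ ≤ _ := mul_le_mul_of_nonneg_left hconc hpos.le

theorem pMap_mem (θ : Fin n → ℝ) : pMap θ ∈ openSimplex (n + 1) :=
  pMap_eq_toSimplex θ ▸ toSimplex_mem fun i _ => exp_pos (θ i)

theorem psiFun_sub_log_add_log {β : ℝ} {w : Fin n → ℝ} (hβ : 0 < β) (hw : ∀ i, 0 < w i)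
    (θ : Fin n → ℝ) :
    psiFun (θ - fun i => log β - log (w i)) + log β = log (β + ∑ i, w i * exp (θ i)) := by
  have hexp (i : Fin n) : exp ((θ - fun i => log β - log (w i)) i) = w i * exp (θ i) / β := by
    rw [Pi.sub_apply, exp_sub, exp_sub, exp_log hβ, exp_log (hw i)]
    field_simp
  rw [psiFun, ← log_mul (by positivity) hβ.ne']
  simp only [hexp, ← Finset.sum_div]
  congr 1
  field_simp

end Simplex

section CConcavity

variable {n : ℕ} {Φ : (Fin (n + 1) → ℝ) → ℝ}

theorem exists_nonneg_affine_support_exp (hΦ0 : ∀ p ∈ openSimplex (n + 1), 0 ≤ Φ p)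
    (hΦ : ConcaveOn ℝ (openSimplex (n + 1)) Φ) (θ : Fin n → ℝ) :
    ∃ (b : ℝ) (g : Fin n → ℝ), 0 ≤ b ∧ (∀ i, 0 ≤ g i) ∧
      (∀ θ', exp (psiFun θ') * Φ (pMap θ') ≤ b + ∑ i, g i * exp (θ' i)) ∧
      exp (psiFun θ) * Φ (pMap θ) = b + ∑ i, g i * exp (θ i) := by
  have hexp (θ : Fin n → ℝ) : (fun i => exp (θ i)) ∈ posOrthant (Fin n) :=
    fun i _ => exp_pos (θ i)
  obtain ⟨b, g, hb, hg, hsupp, heq⟩ :=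
    (concaveOn_simplexPerspective hΦ).exists_nonneg_affine_support
    (fun x hx => mul_nonneg (one_add_sum_pos hx).le (hΦ0 _ (toSimplex_mem hx))) (hexp θ)
  refine ⟨b, g, hb, hg, fun θ' => ?_, ?_⟩
  · simpa only [simplexPerspective_exp] using hsupp _ (hexp θ')
  · simpa only [simplexPerspective_exp] using heq

theorem apply_pMap_eq_zero_of_apply_pMap_eq_zero (hΦ0 : ∀ p ∈ openSimplex (n + 1), 0 ≤ Φ p)
    (hΦ : ConcaveOn ℝ (openSimplex (n + 1)) Φ) {θ₀ : Fin n → ℝ} (h₀ : Φ (pMap θ₀) = 0)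
    (θ : Fin n → ℝ) : Φ (pMap θ) = 0 := by
  obtain ⟨b, g, hb, hg, hsupp, heq⟩ := exists_nonneg_affine_support_exp hΦ0 hΦ θ₀
  have hterms : ∀ i ∈ univ, 0 ≤ g i * exp (θ₀ i) := fun i _ => mul_nonneg (hg i) (exp_pos _).le
  rw [h₀, mul_zero, eq_comm, add_eq_zero_iff_of_nonneg hb (sum_nonneg hterms),
    sum_eq_zero_iff_of_nonneg hterms] at heq
  have hg0 (i : Fin n) : g i = 0 := by
    simpa [(exp_pos _).ne'] using heq.2 i (mem_univ i)
  have := hsupp θ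
  simp only [heq.1, hg0, zero_mul, sum_const_zero, add_zero] at this
  exact le_antisymm (nonpos_of_mul_nonpos_right this (exp_pos _)) (hΦ0 _ (pMap_mem θ))

theorem exists_psiFun_support (hΦ0 : ∀ p ∈ openSimplex (n + 1), 0 ≤ Φ p)
    (hΦ : ConcaveOn ℝ (openSimplex (n + 1)) Φ) (hpos : ∀ θ, 0 < Φ (pMap θ))
    (θ : Fin n → ℝ) (r : ℝ) (hr : log (Φ (pMap θ)) + psiFun θ < r) :
    ∃ φ a, (∀ θ', log (Φ (pMap θ')) + psiFun θ' ≤ psiFun (θ' - φ) + a) ∧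
      psiFun (θ - φ) + a ≤ r := by
  obtain ⟨b, g, hb, hg, hsupp, heq⟩ := exists_nonneg_affine_support_exp hΦ0 hΦ θ
  have hlog (θ' : Fin n → ℝ) :
      log (Φ (pMap θ')) + psiFun θ' = log (exp (psiFun θ') * Φ (pMap θ')) := by
    rw [log_mul (exp_pos _).ne' (hpos θ').ne', log_exp, add_comm]
  -- raising every coefficient by `δ` makes them positive and lifts the majorant at `θ` to `e^r`
  set δ := (exp r - exp (psiFun θ) * Φ (pMap θ)) / exp (psiFun θ)
  have hδ : 0 < δ :=
    div_pos (sub_pos.2 ((log_lt_iff_lt_exp (mul_pos (exp_pos _) (hpos θ))).1 (hlog θ ▸ hr)))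
      (exp_pos _)
  have hβ : 0 < b + δ := by positivity
  have hw : ∀ i, 0 < g i + δ := fun i => by linarith [hg i]
  have hshift (θ' : Fin n → ℝ) : (b + δ) + ∑ i, (g i + δ) * exp (θ' i) =
      b + ∑ i, g i * exp (θ' i) + δ * exp (psiFun θ') := by
    rw [exp_psiFun, mul_add, mul_sum]
    simp only [add_mul, sum_add_distrib]
    ring
  refine ⟨fun i => log (b + δ) - log (g i + δ), log (b + δ), fun θ' => ?_, ?_⟩
  · rw [psiFun_sub_log_add_log hβ hw, hlog, hshift]
    exact log_le_log (mul_pos (exp_pos _) (hpos θ'))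
      (by linarith [hsupp θ', mul_pos hδ (exp_pos (psiFun θ'))])
  · rw [psiFun_sub_log_add_log hβ hw, hshift, ← heq]
    simp only [δ]
    rw [div_mul_cancel₀ _ (exp_pos _).ne', add_sub_cancel, log_exp]

end CConcavity

/-- If `φ : Δₙ → ℝ ∪ {−∞}` is exponentially concave — encoded by a nonnegative concave
function `Φ = e^φ` on the open simplex, with `φ = log Φ` (`= −∞` where `Φ = 0`) — then
`f(θ) = φ(p(θ)) + ψ(θ)` is `c`-concave for the cost `c(θ, φ) = ψ(θ − φ)`: it is the
`c`-transform `f(θ) = inf_φ (c(θ,φ) − g(φ))` of some `g : ℝ^{n−1} → ℝ ∪ {−∞}`. -/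
theorem exp_concave_implies_c_concave (n : ℕ) (Φ : (Fin (n + 1) → ℝ) → ℝ)
    (hΦ0 : ∀ p ∈ openSimplex (n + 1), 0 ≤ Φ p)
    (hconc : ConcaveOn ℝ (openSimplex (n + 1)) Φ) :
    ∃ g : (Fin n → ℝ) → EReal,
      ∀ θ : Fin n → ℝ,
        (if Φ (pMap θ) = 0 then (⊥ : EReal)
          else ((Real.log (Φ (pMap θ)) + psiFun θ : ℝ) : EReal))
        = ⨅ φv : Fin n → ℝ, (((psiFun (θ - φv) : ℝ) : EReal) - g φv) := by
  set c : (Fin n → ℝ) → (Fin n → ℝ) → ℝ := fun θ φ => psiFun (θ - φ)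
  set f : (Fin n → ℝ) → ℝ := fun θ => log (Φ (pMap θ)) + psiFun θ
  by_cases! hzero : ∃ θ₀, Φ (pMap θ₀) = 0
  · obtain ⟨θ₀, h₀⟩ := hzero
    refine ⟨fun _ => ⊤, fun θ => ?_⟩
    simp [apply_pMap_eq_zero_of_apply_pMap_eq_zero hΦ0 hconc h₀ θ, EReal.sub_top]
  · have hpos (θ : Fin n → ℝ) : 0 < Φ (pMap θ) := (hΦ0 _ (pMap_mem θ)).lt_of_ne' (hzero θ)
    refine ⟨cTransform (flip c) (fun θ => f θ), fun θ => ?_⟩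
    rw [if_neg (hzero θ)]
    exact le_antisymm (le_cTransform_cTransform_flip c f θ)
      (cTransform_cTransform_flip_le c f (exists_psiFun_support hΦ0 hconc hpos θ))
end

section
/- Let φ be smooth exponentially concave on Δₙ such that the Euclidean Hessian of Φ = e^φ is strictly negative definite. Then for any tangent vector v to Δₙ at p (i.e., v ∈ ℝⁿ with Σ vᵢ = 0), the second derivative of t ↦ T(p + tv | p) at t = 0 equals v^⊤(−Hess φ(p) − ∇φ(p)∇φ(p)^⊤)v = v^⊤(−Hess Φ(p)/Φ(p))v, and this quantity is strictly positive for v ≠ 0. -/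
open Real Finset

/-!
Restricted to the line `t ↦ p + t v`, with `ψ t = φ (p + t v)`, the L-divergence is
`log (1 + t ψ'(0)) - (ψ t - ψ 0)`, whose second derivative at `0` is `-ψ'(0)² - ψ''(0)`.
Since `(e^ψ)'' = e^ψ (ψ'' + ψ'²)`, this equals `-(e^ψ)''(0) / e^{ψ 0}`, which is positive
because `Φ = e^φ` has negative definite Hessian on tangent directions.
-/

open Filter Topology

theorem iteratedDeriv_two_exp_comp {ψ : ℝ → ℝ} (hψ : ContDiff ℝ 2 ψ) (x : ℝ) :
    iteratedDeriv 2 (fun t => exp (ψ t)) x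
      = exp (ψ x) * (iteratedDeriv 2 ψ x + deriv ψ x ^ 2) := by
  have hψ1 : Differentiable ℝ ψ := hψ.differentiable two_ne_zero
  have hψ2 : Differentiable ℝ (deriv ψ) := by
    simpa using hψ.differentiable_iteratedDeriv 1 (by norm_num)
  have hexp : deriv (fun t => exp (ψ t)) = fun t => exp (ψ t) * deriv ψ t :=
    funext fun t => ((hψ1 t).hasDerivAt.exp).deriv
  rw [iteratedDeriv_eq_iterate, iteratedDeriv_eq_iterate]
  simp only [Function.iterate_succ, Function.iterate_zero, Function.comp_apply, Function.id_def]
  rw [hexp]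
  exact (((hψ1 x).hasDerivAt.exp).mul (hψ2 x).hasDerivAt).deriv.trans (by ring)

theorem iteratedDeriv_two_log_one_add_mul {S x : ℝ} (hx : 1 + x * S ≠ 0) :
    iteratedDeriv 2 (fun t => log (1 + t * S)) x = -(S / (1 + x * S)) ^ 2 := by
  have hlin : ∀ t, HasDerivAt (fun s => 1 + s * S) S t := fun t => by
    simpa using ((hasDerivAt_id t).mul_const S).const_add 1
  have hderiv : deriv (fun t => log (1 + t * S)) =ᶠ[𝓝 x] fun t => S / (1 + t * S) := by
    filter_upwards [(hlin x).continuousAt.eventually_ne hx] with t ht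
    exact ((hlin t).log ht).deriv
  rw [iteratedDeriv_succ, iteratedDeriv_one, hderiv.deriv_eq]
  exact ((hasDerivAt_const x S).div (hlin x) hx).deriv.trans (by field_simp; ring)

theorem contDiffAt_log_one_add_mul {S x : ℝ} (hx : 1 + x * S ≠ 0) (n : WithTop ℕ∞) :
    ContDiffAt ℝ n (fun t => log (1 + t * S)) x :=
  (contDiffAt_const.add (contDiffAt_id.mul contDiffAt_const)).log hx

theorem iteratedDeriv_two_log_one_add_deriv_mul_sub {ψ : ℝ → ℝ} (hψ : ContDiff ℝ 2 ψ) :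
    iteratedDeriv 2 (fun t => log (1 + t * deriv ψ 0) - (ψ t - ψ 0)) 0
      = -iteratedDeriv 2 ψ 0 - deriv ψ 0 ^ 2 := by
  have h0 : (1 : ℝ) + 0 * deriv ψ 0 ≠ 0 := by norm_num
  rw [iteratedDeriv_fun_sub (contDiffAt_log_one_add_mul h0 2) (hψ.sub contDiff_const).contDiffAt,
    iteratedDeriv_two_log_one_add_mul h0, iteratedDeriv_fun_sub hψ.contDiffAt contDiffAt_const,
    iteratedDeriv_const]
  simp only [zero_mul, add_zero, div_one, OfNat.ofNat_ne_zero, ↓reduceIte, sub_zero]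
  ring

theorem sum_mul_add_smul_sub {n : ℕ} (g p v : Fin n → ℝ) (t : ℝ) :
    ∑ i, g i * ((p + t • v) i - p i) = t * ∑ i, g i * v i := by
  rw [mul_sum]
  exact sum_congr rfl fun i _ => by simp only [Pi.add_apply, Pi.smul_apply, smul_eq_mul]; ring

theorem L_divergence_second_derivative_general (n : ℕ) (φf : (Fin n → ℝ) → ℝ)
    (g : (Fin n → ℝ) → (Fin n → ℝ))
    (Hφ HΦ : (Fin n → ℝ) → Matrix (Fin n) (Fin n) ℝ)
    (hsm : ∀ p ∈ openSimplex n, ∀ v : Fin n → ℝ, ∑ i, v i = 0 →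
      ContDiff ℝ 2 (fun t : ℝ => φf (p + t • v)))
    (hg : ∀ p ∈ openSimplex n, ∀ v : Fin n → ℝ, ∑ i, v i = 0 →
      HasDerivAt (fun t : ℝ => φf (p + t • v)) (∑ i, g p i * v i) 0)
    (hH : ∀ p ∈ openSimplex n, ∀ v : Fin n → ℝ, ∑ i, v i = 0 →
      iteratedDeriv 2 (fun t : ℝ => φf (p + t • v)) 0 = ∑ i, ∑ j, v i * Hφ p i j * v j)
    (hHΦ : ∀ p ∈ openSimplex n, ∀ v : Fin n → ℝ, ∑ i, v i = 0 →
      iteratedDeriv 2 (fun t : ℝ => Real.exp (φf (p + t • v))) 0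
        = ∑ i, ∑ j, v i * HΦ p i j * v j)
    (hneg : ∀ p ∈ openSimplex n, ∀ v : Fin n → ℝ, ∑ i, v i = 0 → v ≠ 0 →
      ∑ i, ∑ j, v i * HΦ p i j * v j < 0) :
    ∀ p ∈ openSimplex n, ∀ v : Fin n → ℝ, ∑ i, v i = 0 →
      iteratedDeriv 2 (fun t : ℝ =>
          Real.log (1 + ∑ i, g p i * ((p + t • v) i - p i)) - (φf (p + t • v) - φf p)) 0
        = ∑ i, ∑ j, v i * (-(Hφ p i j)) * v j - (∑ i, g p i * v i) ^ 2 ∧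
      ∑ i, ∑ j, v i * (-(Hφ p i j)) * v j - (∑ i, g p i * v i) ^ 2
        = -(∑ i, ∑ j, v i * HΦ p i j * v j) / Real.exp (φf p) ∧
      (v ≠ 0 →
        0 < ∑ i, ∑ j, v i * (-(Hφ p i j)) * v j - (∑ i, g p i * v i) ^ 2) := by
  intro p hp v hv
  set ψ : ℝ → ℝ := fun t => φf (p + t • v)
  have hψ0 : ψ 0 = φf p := by simp [ψ]
  have hψ' : deriv ψ 0 = ∑ i, g p i * v i := (hg p hp v hv).deriv
  have hT :
      (fun t : ℝ => log (1 + ∑ i, g p i * ((p + t • v) i - p i)) - (φf (p + t • v) - φf p))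
      = fun t => log (1 + t * deriv ψ 0) - (ψ t - ψ 0) := by
    funext t
    rw [sum_mul_add_smul_sub, hψ', hψ0]
  have hHφ : ∑ i, ∑ j, v i * (-(Hφ p i j)) * v j = -iteratedDeriv 2 ψ 0 := by
    simp only [mul_neg, neg_mul, sum_neg_distrib]
    exact congrArg Neg.neg (hH p hp v hv).symm
  have hHΦ' : ∑ i, ∑ j, v i * HΦ p i j * v j
      = exp (φf p) * (iteratedDeriv 2 ψ 0 + deriv ψ 0 ^ 2) := by
    rw [← hHΦ p hp v hv, ← hψ0, iteratedDeriv_two_exp_comp (hsm p hp v hv)]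
  rw [hHφ, ← hψ', hHΦ', hT, iteratedDeriv_two_log_one_add_deriv_mul_sub (hsm p hp v hv)]
  refine ⟨by ring, by field_simp; ring, fun hv0 => ?_⟩
  have hneg' := neg_of_mul_neg_right (hHΦ' ▸ hneg p hp v hv hv0) (exp_pos _).le
  linarith

/-- For smooth exponentially concave `φ` with strictly negative definite Hessian of
`Φ = e^φ` on tangent directions, and any tangent vector `v` at `p ∈ Δₙ` (`Σ vᵢ = 0`),
the second derivative of `t ↦ T(p + tv | p)` at `t = 0` equals
`vᵀ(−Hess φ(p) − ∇φ(p)∇φ(p)ᵀ)v = vᵀ(−Hess Φ(p)/Φ(p))v`, and is positive for `v ≠ 0`.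
Here `g`, `Hφ`, `HΦ` are the gradient of `φ` and the Hessians of `φ` and `Φ`. -/
theorem L_divergence_second_derivative (n : ℕ) (φf : (Fin n → ℝ) → ℝ)
    (g : (Fin n → ℝ) → (Fin n → ℝ))
    (Hφ HΦ : (Fin n → ℝ) → Matrix (Fin n) (Fin n) ℝ)
    (hconc : ConcaveOn ℝ (openSimplex n) (fun p => Real.exp (φf p)))
    (hsm : ∀ p ∈ openSimplex n, ∀ v : Fin n → ℝ, ∑ i, v i = 0 →
      ContDiff ℝ 2 (fun t : ℝ => φf (p + t • v)))
    (hg : ∀ p ∈ openSimplex n, ∀ v : Fin n → ℝ, ∑ i, v i = 0 →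
      HasDerivAt (fun t : ℝ => φf (p + t • v)) (∑ i, g p i * v i) 0)
    (hH : ∀ p ∈ openSimplex n, ∀ v : Fin n → ℝ, ∑ i, v i = 0 →
      iteratedDeriv 2 (fun t : ℝ => φf (p + t • v)) 0 = ∑ i, ∑ j, v i * Hφ p i j * v j)
    (hHΦ : ∀ p ∈ openSimplex n, ∀ v : Fin n → ℝ, ∑ i, v i = 0 →
      iteratedDeriv 2 (fun t : ℝ => Real.exp (φf (p + t • v))) 0
        = ∑ i, ∑ j, v i * HΦ p i j * v j)
    (hneg : ∀ p ∈ openSimplex n, ∀ v : Fin n → ℝ, ∑ i, v i = 0 → v ≠ 0 →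
      ∑ i, ∑ j, v i * HΦ p i j * v j < 0) :
    ∀ p ∈ openSimplex n, ∀ v : Fin n → ℝ, ∑ i, v i = 0 →
      iteratedDeriv 2 (fun t : ℝ =>
          Real.log (1 + ∑ i, g p i * ((p + t • v) i - p i)) - (φf (p + t • v) - φf p)) 0
        = ∑ i, ∑ j, v i * (-(Hφ p i j)) * v j - (∑ i, g p i * v i) ^ 2 ∧
      ∑ i, ∑ j, v i * (-(Hφ p i j)) * v j - (∑ i, g p i * v i) ^ 2
        = -(∑ i, ∑ j, v i * HΦ p i j * v j) / Real.exp (φf p) ∧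
      (v ≠ 0 →
        0 < ∑ i, ∑ j, v i * (-(Hφ p i j)) * v j - (∑ i, g p i * v i) ^ 2) :=
  L_divergence_second_derivative_general n φf g Hφ HΦ hsm hg hH hHΦ hneg
end
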